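/- Let n, k be positive integers with n ≥ 2(k+1), let G be the web graph W_n^k, and let C ⊆ V(G) be arbitrary (possibly empty). Set m := n − 2k if C = V(G) and m := n − 2k + 1 otherwise. Then γ_gr(G;C) = m if and only if (i) C = V(G), or (ii) there exists i ∈ V(G) ∖ C such that the subgraph of G induced by V(G) ∖ N[i] is a path on t = n − 2k − 1 vertices and C ∩ (V(G) ∖ N[i]) is a good configuration for that path; in all other cases γ_gr(G;C) = m − 1. -/

import Mathlib

/-!
A generalized neighborhood in `W_n^k` has `2k` or `2k + 1` vertices, and every later vertex of a
legal sequence dominates at least one new vertex, so a legal dominating sequence starting at `v`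
has length at most `n - |N⟨v⟩| + 1`; the vertices `0, 1, …, n - 2k - 1` attain `n - 2k`.
Length `n - 2k + 1` forces the first vertex `i` to lie outside `C` and every later vertex to
dominate exactly one new vertex. Given a good configuration of the path `V ∖ N[i]`, such a
sequence runs through the path, peeling it from its ends as the configuration prescribes, and
closes with a neighbor of `i`. Conversely, reading a tight sequence step by step: for `k ≥ 2`
any three consecutive path vertices form a triangle, so the path has at most two vertices and
the second step decides the configuration; on the cycle `W_n^1` each step peels one end of
the path, one rule of the good configuration at a time.
-/

namespace LegalSeq

variable {V : Type*}

/-- The generalized neighborhood `N⟨v⟩`: the closed neighborhood of `v` if `v ∈ C`,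
the open neighborhood otherwise. -/
noncomputable def gN [Fintype V] (G : SimpleGraph V) (C : Set V) (v : V) : Finset V := by
  classical
  exact (Set.toFinite (if v ∈ C then insert v (G.neighborSet v) else G.neighborSet v)).toFinset

/-- Union of the generalized neighborhoods of the vertices of a list. -/
noncomputable def nUnion [Fintype V] (G : SimpleGraph V) (C : Set V) (l : List V) : Finset V := by
  classical
  exact l.toFinset.biUnion (gN G C)

/-- A list of pairwise distinct vertices is a legal sequence if every vertex of the sequence,
except possibly the first one, has a generalized neighbor that is not in the generalized
neighborhood of any preceding vertex. -/
def IsLegal [Fintype V] (G : SimpleGraph V) (C : Set V) (l : List V) : Prop :=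
  l.Nodup ∧ ∀ (i : ℕ) (h : i < l.length), 0 < i →
    ¬ (gN G C (l.get ⟨i, h⟩) ⊆ nUnion G C (l.take i))

/-- A sequence is dominating if the generalized neighborhoods of its members cover all vertices. -/
def IsDom [Fintype V] (G : SimpleGraph V) (C : Set V) (l : List V) : Prop :=
  nUnion G C l = Finset.univ

/-- The Grundy domination number of the instance `(G; C)`: the maximum length of a sequence
that is both legal and dominating. -/
noncomputable def grundy [Fintype V] (G : SimpleGraph V) (C : Set V) : ℕ :=
  sSup {k : ℕ | ∃ l : List V, IsLegal G C l ∧ IsDom G C l ∧ l.length = k}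

/-- The path graph `P_t` on the vertex set `{1, …, t}`, with edges `{i, i+1}`. -/
def pathG (t : ℕ) : SimpleGraph ↥(Set.Icc 1 t) where
  Adj u v := (u : ℕ) + 1 = (v : ℕ) ∨ (v : ℕ) + 1 = (u : ℕ)
  symm := ⟨by intro u v h; tauto⟩
  loopless := ⟨by intro u h; rcases h with h | h <;> omega⟩

/-- `GoodConf C a b` : `C` is a good configuration for the path with vertex set `{a, …, b}`
(labels taken in `ℕ`, edges between consecutive integers). -/
inductive GoodConf (C : Set ℕ) : ℕ → ℕ → Prop
  | single (a : ℕ) (h : a ∈ C) : GoodConf C a a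
  | pair (a : ℕ) (h : ¬(a ∈ C ∧ a + 1 ∈ C)) : GoodConf C a (a + 1)
  | left (a b : ℕ) (h : a + 2 ≤ b) (ha : a ∉ C) (hg : GoodConf C (a + 2) b) : GoodConf C a b
  | right (a b : ℕ) (h : a + 2 ≤ b) (hb : b ∉ C) (hg : GoodConf C a (b - 2)) : GoodConf C a b

/-- The web graph `W_n^k`: vertices `{0, …, n−1}`, with `i ~ j` iff `0 < |i − j| ≤ k` or
`|i − j| ≥ n − k`. -/
def webG (n k : ℕ) : SimpleGraph (Fin n) where
  Adj i j := i ≠ j ∧ (Nat.dist i.1 j.1 ≤ k ∨ n - k ≤ Nat.dist i.1 j.1)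
  symm := by
    constructor
    intro i j h
    refine ⟨h.1.symm, ?_⟩
    rw [Nat.dist_comm]
    exact h.2
  loopless := ⟨fun i h => h.1 rfl⟩

/-- Condition (ii) of Statement 5: there is `i ∉ C` such that the subgraph of `W_n^k` induced
by `V ∖ N[i]` is a path on `t = n − 2k − 1` vertices and `C` restricted to it is a good
configuration with respect to the linear order of the path. -/
def WebPathCond (n k : ℕ) (C : Set (Fin n)) : Prop :=
  ∃ i : Fin n, i ∉ C ∧
    ∃ e : pathG (n - 2 * k - 1) ≃g
        ((webG n k).induce {v : Fin n | v ≠ i ∧ ¬ (webG n k).Adj i v}),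
      GoodConf {a : ℕ | ∃ h : a ∈ Set.Icc 1 (n - 2 * k - 1), ((e ⟨a, h⟩ : _) : Fin n) ∈ C}
        1 (n - 2 * k - 1)


section Neighborhoods

variable [Fintype V] (G : SimpleGraph V) (C : Set V)

lemma mem_gN {x v : V} : x ∈ gN G C v ↔ G.Adj v x ∨ (x = v ∧ v ∈ C) := by
  classical
  simp only [gN, Set.Finite.mem_toFinset]
  split_ifs <;> simp [*, or_comm]

lemma self_mem_gN_iff {v : V} : v ∈ gN G C v ↔ v ∈ C := by
  simp [mem_gN]

lemma mem_nUnion {x : V} {l : List V} : x ∈ nUnion G C l ↔ ∃ v ∈ l, x ∈ gN G C v := by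
  classical
  simp [nUnion]

lemma nUnion_nil : nUnion G C [] = ∅ := by
  ext; simp [mem_nUnion]

variable [DecidableEq V]

lemma nUnion_cons (v : V) (l : List V) : nUnion G C (v :: l) = gN G C v ∪ nUnion G C l := by
  ext; simp [mem_nUnion]

lemma nUnion_append (l₁ l₂ : List V) :
    nUnion G C (l₁ ++ l₂) = nUnion G C l₁ ∪ nUnion G C l₂ := by
  ext; simp [mem_nUnion, or_and_right, exists_or]

end Neighborhoods

section LegalAfter

variable [Fintype V] [DecidableEq V] (G : SimpleGraph V) (C : Set V)

/-- `l` is legal as the continuation of a sequence that has already dominated `X`. -/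
def LegalAfter : Finset V → List V → Prop
  | _, [] => True
  | X, v :: l => ¬ gN G C v ⊆ X ∧ LegalAfter (X ∪ gN G C v) l

/-- The equality case of `LegalAfter.card_add_length_le` for dominating sequences. -/
def IsTight : Finset V → List V → Prop
  | X, [] => X = Finset.univ
  | X, v :: l => ∃ w, gN G C v \ X = {w} ∧ IsTight (insert w X) l

variable {G C}

lemma legalAfter_append {X : Finset V} {l₁ l₂ : List V} :
    LegalAfter G C X (l₁ ++ l₂) ↔
      LegalAfter G C X l₁ ∧ LegalAfter G C (X ∪ nUnion G C l₁) l₂ := by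
  induction l₁ generalizing X with
  | nil => simp [LegalAfter, nUnion_nil]
  | cons v l ih => simp [LegalAfter, ih, nUnion_cons, Finset.union_assoc, and_assoc]

lemma legalAfter_singleton {X : Finset V} {v : V} :
    LegalAfter G C X [v] ↔ ¬ gN G C v ⊆ X := by
  simp [LegalAfter]

lemma LegalAfter.anti {X Y : Finset V} {l : List V} (h : LegalAfter G C X l) (hYX : Y ⊆ X) :
    LegalAfter G C Y l := by
  induction l generalizing X Y with
  | nil => trivial
  | cons v l ih =>
    exact ⟨fun hv => h.1 (hv.trans hYX), ih h.2 (Finset.union_subset_union hYX le_rfl)⟩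

lemma LegalAfter.not_subset_of_mem {X : Finset V} {l : List V} (h : LegalAfter G C X l)
    {v : V} (hv : v ∈ l) : ¬ gN G C v ⊆ X := by
  induction l generalizing X with
  | nil => simp at hv
  | cons u l ih =>
    rcases List.mem_cons.mp hv with rfl | hv
    · exact h.1
    · exact fun hsub => ih h.2 hv (hsub.trans Finset.subset_union_left)

lemma LegalAfter.nodup {X : Finset V} {l : List V} (h : LegalAfter G C X l) : l.Nodup := by
  induction l generalizing X with
  | nil => exact List.nodup_nil
  | cons v l ih =>
    exact List.nodup_cons.mpr
      ⟨fun hv => h.2.not_subset_of_mem hv Finset.subset_union_right, ih h.2⟩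

lemma legalAfter_iff_getElem {X : Finset V} {l : List V} :
    LegalAfter G C X l ↔
      ∀ (j : ℕ) (hj : j < l.length), ¬ gN G C l[j] ⊆ X ∪ nUnion G C (l.take j) := by
  induction l generalizing X with
  | nil => simp [LegalAfter]
  | cons v l ih =>
    simp only [LegalAfter, ih]
    constructor
    · rintro ⟨h0, hs⟩ (_ | j) hj
      · simpa [nUnion_nil] using h0
      · simpa [nUnion_cons, Finset.union_assoc] using hs j (by simpa using hj)
    · intro h
      refine ⟨?_, fun j hj => ?_⟩
      · have h0 := h 0 (by simp)
        simpa [nUnion_nil] using h0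
      · have hj' := h (j + 1) (by simpa using hj)
        simpa [nUnion_cons, Finset.union_assoc] using hj'

lemma isLegal_cons_iff {v : V} {l : List V} :
    IsLegal G C (v :: l) ↔ LegalAfter G C (gN G C v) l := by
  have hidx : (∀ (i : ℕ) (h : i < (v :: l).length), 0 < i →
      ¬ gN G C ((v :: l).get ⟨i, h⟩) ⊆ nUnion G C ((v :: l).take i)) ↔
      LegalAfter G C (gN G C v) l := by
    rw [legalAfter_iff_getElem]
    constructor
    · intro h j hj
      simpa [nUnion_cons] using h (j + 1) (by simpa using hj) j.succ_pos
    · rintro h (_ | j) hj hpos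
      · exact absurd hpos (lt_irrefl 0)
      · simpa [nUnion_cons] using h j (by simpa using hj)
  refine ⟨fun h => hidx.mp h.2, fun h => ⟨?_, hidx.mpr h⟩⟩
  exact List.nodup_cons.mpr ⟨fun hv => h.not_subset_of_mem hv le_rfl, h.nodup⟩

lemma LegalAfter.card_add_length_le {X : Finset V} {l : List V} (h : LegalAfter G C X l) :
    X.card + l.length ≤ (X ∪ nUnion G C l).card := by
  induction l generalizing X with
  | nil => simp [nUnion_nil]
  | cons v l ih =>
    have hgrow : X.card < (X ∪ gN G C v).card :=
      Finset.card_lt_card (Finset.ssubset_iff_subset_ne.mpr ⟨Finset.subset_union_left,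
        fun heq => h.1 (heq ▸ Finset.subset_union_right)⟩)
    have := ih h.2
    rw [nUnion_cons, ← Finset.union_assoc]
    simp only [List.length_cons]
    omega

lemma LegalAfter.isTight {X : Finset V} {l : List V} (h : LegalAfter G C X l)
    (hdom : X ∪ nUnion G C l = Finset.univ) (hcard : X.card + l.length = Fintype.card V) :
    IsTight G C X l := by
  induction l generalizing X with
  | nil => simpa [IsTight, nUnion_nil] using hdom
  | cons v l ih =>
    rw [nUnion_cons, ← Finset.union_assoc] at hdom
    have hbound := h.2.card_add_length_le
    rw [hdom, Finset.card_univ] at hbound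
    have hnew : (gN G C v \ X).card = 1 := by
      have hpos : 0 < (gN G C v \ X).card :=
        Finset.card_pos.mpr (Finset.sdiff_nonempty.mpr h.1)
      rw [← Finset.union_sdiff_self_eq_union,
        Finset.card_union_of_disjoint Finset.disjoint_sdiff] at hbound
      simp only [List.length_cons] at hcard
      omega
    obtain ⟨w, hw⟩ := Finset.card_eq_one.mp hnew
    have hins : X ∪ gN G C v = insert w X := by
      rw [← Finset.union_sdiff_self_eq_union, hw, Finset.union_comm]; rfl
    refine ⟨w, hw, ?_⟩
    rw [← hins]
    refine ih h.2 hdom ?_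
    rw [hins, Finset.card_insert_of_notMem
      (Finset.mem_sdiff.mp (hw ▸ Finset.mem_singleton_self w)).2]
    simp only [List.length_cons] at hcard
    omega

end LegalAfter

section DomOrder

variable [Fintype V] [DecidableEq V] {G : SimpleGraph V} {C : Set V}

variable (G C) in
/-- The last clause says that every vertex of `l` dominates a new vertex of `P`. -/
def IsDomOrder (P : Finset V) (l : List V) : Prop :=
  l.toFinset = P ∧ P ⊆ nUnion G C l ∧ LegalAfter G C Pᶜ l

lemma IsDomOrder.length_eq {P : Finset V} {l : List V} (h : IsDomOrder G C P l) :
    l.length = P.card := by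
  rw [← h.1, List.toFinset_card_of_nodup h.2.2.nodup]

lemma isDomOrder_empty : IsDomOrder G C ∅ [] := by
  simp [IsDomOrder, LegalAfter]

lemma isDomOrder_singleton {x : V} (hx : x ∈ C) : IsDomOrder G C {x} [x] := by
  have hxx : x ∈ gN G C x := (self_mem_gN_iff G C).mpr hx
  refine ⟨by simp, by simpa [nUnion_cons, nUnion_nil] using hxx, ?_⟩
  rw [legalAfter_singleton]
  exact fun hsub => Finset.mem_compl.mp (hsub hxx) (Finset.mem_singleton_self x)

/-- `x` newly dominates `y`, and `x` itself is first dominated by `y`, which comes last. -/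
lemma IsDomOrder.extend {P : Finset V} {l : List V} (h : IsDomOrder G C P l) {x y : V}
    (hx : x ∉ C) (hxy : G.Adj x y) (hxP : ∀ v ∈ P, ¬ G.Adj x v) :
    IsDomOrder G C (insert x (insert y P)) (x :: l ++ [y]) := by
  obtain ⟨hset, hcov, hleg⟩ := h
  have hyx : x ∈ gN G C y := (mem_gN G C).mpr (Or.inl hxy.symm)
  have hxy' : y ∈ gN G C x := (mem_gN G C).mpr (Or.inl hxy)
  have hxx : x ∉ gN G C x := fun h => hx ((self_mem_gN_iff G C).mp h)
  have hgNx : ∀ v ∈ P, v ∉ gN G C x := fun v hv hvx =>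
    ((mem_gN G C).mp hvx).elim (hxP v hv) fun h => hx (h.1 ▸ h.2)
  have hxl : x ∉ nUnion G C l := by
    rw [mem_nUnion]
    rintro ⟨v, hv, hxv⟩
    rcases (mem_gN G C).mp hxv with hvx | ⟨rfl, hv'⟩
    · exact hxP v (hset ▸ List.mem_toFinset.mpr hv) hvx.symm
    · exact hx hv'
  refine ⟨?_, ?_, ?_⟩
  · ext v
    simp [← hset]
  · intro v hv
    simp only [List.cons_append, nUnion_cons, nUnion_append, nUnion_nil, Finset.union_empty,
      Finset.mem_union, Finset.mem_insert] at hv ⊢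
    rcases hv with rfl | rfl | hv
    · exact Or.inr (Or.inr hyx)
    · exact Or.inl hxy'
    · exact Or.inr (Or.inl (hcov hv))
  · refine ⟨fun hsub => Finset.mem_compl.mp (hsub hxy') (by simp), ?_⟩
    show LegalAfter G C _ (l ++ [y])
    rw [legalAfter_append, legalAfter_singleton]
    refine ⟨hleg.anti fun v hv => ?_, fun hsub => ?_⟩
    · rcases Finset.mem_union.mp hv with hv | hv
      · exact Finset.mem_compl.mpr fun hvP => Finset.mem_compl.mp hv (by simp [hvP])
      · exact Finset.mem_compl.mpr fun hvP => hgNx v hvP hv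
    · rcases Finset.mem_union.mp (hsub hyx) with hx' | hx'
      · rcases Finset.mem_union.mp hx' with hx' | hx'
        · exact Finset.mem_compl.mp hx' (by simp)
        · exact hxx hx'
      · exact hxl hx'

lemma GoodConf.exists_isDomOrder {f : ℕ → V} {c d : ℕ} (h : GoodConf (f ⁻¹' C) c d)
    (hadj : ∀ x ∈ Set.Icc c d, ∀ y ∈ Set.Icc c d,
      G.Adj (f x) (f y) ↔ x + 1 = y ∨ y + 1 = x) :
    ∃ l, IsDomOrder G C ((Finset.Icc c d).image f) l := by
  induction h with
  | single a ha =>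
    exact ⟨[f a], by simpa using isDomOrder_singleton (G := G) (C := C) (x := f a) ha⟩
  | pair a ha =>
    have hadj' : G.Adj (f a) (f (a + 1)) := (hadj a (by simp) (a + 1) (by simp)).mpr (by simp)
    have hIcc : Finset.Icc a (a + 1) = {a, a + 1} := by ext; simp; omega
    by_cases haC : f a ∈ C
    · have h1 : f (a + 1) ∉ C := fun h1 => ha ⟨haC, h1⟩
      refine ⟨[f (a + 1)] ++ [f a], ?_⟩
      simpa [hIcc, Finset.pair_comm] using
        isDomOrder_empty.extend h1 hadj'.symm (by simp)
    · refine ⟨[f a] ++ [f (a + 1)], ?_⟩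
      simpa [hIcc] using isDomOrder_empty.extend haC hadj' (by simp)
  | left a b hab ha _ ih =>
    obtain ⟨l, hl⟩ := ih fun x hx y hy =>
      hadj x ⟨by grind, hx.2⟩ y ⟨by grind, hy.2⟩
    have hIcc : Finset.Icc a b = insert a (insert (a + 1) (Finset.Icc (a + 2) b)) := by
      ext; simp; omega
    refine ⟨f a :: l ++ [f (a + 1)], ?_⟩
    rw [hIcc, Finset.image_insert, Finset.image_insert]
    refine hl.extend ha ((hadj a ⟨le_rfl, by omega⟩ (a + 1) ⟨by omega, by omega⟩).mpr (by simp)) ?_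
    simp only [Finset.mem_image, Finset.mem_Icc]
    rintro _ ⟨x, hx, rfl⟩
    rw [hadj a ⟨le_rfl, by omega⟩ x ⟨by omega, hx.2⟩]
    omega
  | right a b hab hb _ ih =>
    obtain ⟨l, hl⟩ := ih fun x hx y hy =>
      hadj x ⟨hx.1, by grind⟩ y ⟨hy.1, by grind⟩
    have hIcc : Finset.Icc a b = insert b (insert (b - 1) (Finset.Icc a (b - 2))) := by
      ext; simp; omega
    refine ⟨f b :: l ++ [f (b - 1)], ?_⟩
    rw [hIcc, Finset.image_insert, Finset.image_insert]
    refine hl.extend hb ((hadj b ⟨by omega, le_rfl⟩ (b - 1) ⟨by omega, by omega⟩).mpr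
      (by omega)) ?_
    simp only [Finset.mem_image, Finset.mem_Icc]
    rintro _ ⟨x, hx, rfl⟩
    rw [hadj b ⟨by omega, le_rfl⟩ x ⟨hx.1, by omega⟩]
    omega

end DomOrder

lemma GoodConf.le {S : Set ℕ} {a b : ℕ} (h : GoodConf S a b) : a ≤ b := by
  induction h <;> omega

lemma GoodConf.congr {S S' : Set ℕ} {a b : ℕ} (h : GoodConf S a b)
    (hS : ∀ x, a ≤ x → x ≤ b → (x ∈ S ↔ x ∈ S')) : GoodConf S' a b := by
  induction h with
  | single a ha => exact .single a ((hS a le_rfl le_rfl).mp ha)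
  | pair a ha =>
    exact .pair a fun h' => ha ⟨(hS a (by omega) (by omega)).mpr h'.1,
      (hS (a + 1) (by omega) (by omega)).mpr h'.2⟩
  | left a b hab ha _ ih =>
    exact .left a b hab (fun h' => ha ((hS a le_rfl (by omega)).mpr h'))
      (ih fun x h1 h2 => hS x (by omega) h2)
  | right a b hab hb _ ih =>
    exact .right a b hab (fun h' => hb ((hS b (by omega) le_rfl).mpr h'))
      (ih fun x h1 h2 => hS x h1 (by omega))

section PathCondition

variable [Fintype V] [DecidableEq V] {G : SimpleGraph V} {C : Set V}

lemma exists_isDomOrder_of_iso {S : Set V} {t : ℕ} (e : pathG t ≃g G.induce S)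
    (hgood : GoodConf {a | ∃ h : a ∈ Set.Icc 1 t, (e ⟨a, h⟩ : V) ∈ C} 1 t) :
    ∃ P : Finset V, ↑P = S ∧ P.card = t ∧ ∃ l, IsDomOrder G C P l := by
  have ht : 1 ≤ t := hgood.le
  let f : ℕ → V := fun a => if h : a ∈ Set.Icc 1 t then e ⟨a, h⟩ else e ⟨1, le_rfl, ht⟩
  have hf : ∀ a (h : a ∈ Set.Icc 1 t), f a = e ⟨a, h⟩ := fun a h => dif_pos h
  have hadj : ∀ x ∈ Set.Icc 1 t, ∀ y ∈ Set.Icc 1 t,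
      G.Adj (f x) (f y) ↔ x + 1 = y ∨ y + 1 = x := fun x hx y hy => by
    rw [hf x hx, hf y hy]
    exact e.map_adj_iff
  have hinj : Set.InjOn f (Finset.Icc 1 t) := fun x hx y hy hxy => by
    rw [Finset.coe_Icc] at hx hy
    rw [hf x hx, hf y hy] at hxy
    simpa using e.injective (Subtype.ext hxy)
  have hgood' : GoodConf (f ⁻¹' C) 1 t := hgood.congr fun x h1 h2 => by
    simp [hf x ⟨h1, h2⟩, h1, h2]
  refine ⟨(Finset.Icc 1 t).image f, ?_, by simp [Finset.card_image_of_injOn hinj],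
    hgood'.exists_isDomOrder hadj⟩
  ext v
  simp only [Finset.coe_image, Finset.coe_Icc, Set.mem_image]
  constructor
  · rintro ⟨a, ha, rfl⟩
    exact hf a ha ▸ (e ⟨a, ha⟩).2
  · intro hv
    obtain ⟨⟨a, ha⟩, hea⟩ := e.surjective ⟨v, hv⟩
    exact ⟨a, ha, by rw [hf a ha, hea]⟩

/-- Start at `i`, run through the path `V ∖ N[i]` in a dominating order, and finish with the
neighbor `j` of `i`, whose only new vertex is `i` itself. -/
theorem exists_isLegal_isDom_of_induce_path {i j : V} (hi : i ∉ C) (hij : G.Adj i j) {t : ℕ}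
    (e : pathG t ≃g G.induce {v | v ≠ i ∧ ¬ G.Adj i v})
    (hgood : GoodConf {a | ∃ h : a ∈ Set.Icc 1 t, (e ⟨a, h⟩ : V) ∈ C} 1 t) :
    ∃ l, IsLegal G C l ∧ IsDom G C l ∧ l.length = t + 2 := by
  obtain ⟨P, hPS, hcard, M, hM⟩ := exists_isDomOrder_of_iso e hgood
  have hP : ∀ v, v ∈ P ↔ v ≠ i ∧ ¬ G.Adj i v := fun v => by
    rw [← Finset.mem_coe, hPS]; rfl
  have hiP : ∀ v ∈ P, i ∉ gN G C v := fun v hv hiv => by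
    rcases (mem_gN G C).mp hiv with h | h
    · exact ((hP v).mp hv).2 h.symm
    · exact ((hP v).mp hv).1 h.1.symm
  have hgNi : gN G C i ⊆ Pᶜ := fun v hv => Finset.mem_compl.mpr fun hvP => by
    rcases (mem_gN G C).mp hv with h | h
    · exact ((hP v).mp hvP).2 h
    · exact hi (h.1 ▸ h.2)
  refine ⟨i :: (M ++ [j]), ?_, ?_, by simp [hM.length_eq, hcard]⟩
  · rw [isLegal_cons_iff, legalAfter_append, legalAfter_singleton]
    refine ⟨hM.2.2.anti hgNi, fun hsub => ?_⟩
    rcases Finset.mem_union.mp (hsub ((mem_gN G C).mpr (Or.inl hij.symm))) with h | h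
    · exact hi ((self_mem_gN_iff G C).mp h)
    · obtain ⟨v, hv, hiv⟩ := (mem_nUnion G C).mp h
      exact hiP v (hM.1 ▸ List.mem_toFinset.mpr hv) hiv
  · rw [IsDom, Finset.eq_univ_iff_forall]
    intro v
    simp only [nUnion_cons, nUnion_append, nUnion_nil, Finset.union_empty, Finset.mem_union]
    by_cases hvi : v = i
    · exact Or.inr (Or.inr ((mem_gN G C).mpr (Or.inl (hvi ▸ hij.symm))))
    by_cases hiv : G.Adj i v
    · exact Or.inl ((mem_gN G C).mpr (Or.inl hiv))
    · exact Or.inr (Or.inl (hM.2.1 ((hP v).mpr ⟨hvi, hiv⟩)))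

end PathCondition

section Rotation

variable {n : ℕ}

def rot (i : Fin n) (s : ℕ) : Fin n := ⟨(i + s) % n, Nat.mod_lt _ i.pos⟩

lemma mod_eq_ite_of_lt_two_mul {x : ℕ} (h : x < 2 * n) :
    x % n = if x < n then x else x - n := by
  split_ifs with h'
  · exact Nat.mod_eq_of_lt h'
  · rw [Nat.mod_eq_sub_mod (by omega), Nat.mod_eq_of_lt (by omega)]

lemma rot_val (i : Fin n) (s : ℕ) : (rot i s).val = (i + s) % n := rfl

lemma rot_zero (i : Fin n) : rot i 0 = i :=
  Fin.ext (Nat.mod_eq_of_lt i.2)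

lemma rot_inj (i : Fin n) {s s' : ℕ} (hs : s < n) (hs' : s' < n) :
    rot i s = rot i s' ↔ s = s' := by
  have := i.2
  rw [Fin.ext_iff, rot_val, rot_val, mod_eq_ite_of_lt_two_mul (by omega),
    mod_eq_ite_of_lt_two_mul (by omega)]
  split_ifs <;> omega

lemma exists_rot_eq (i v : Fin n) : ∃ s < n, rot i s = v := by
  have := i.2; have := v.2
  refine ⟨if i ≤ v then v - i else v + n - i, by split_ifs <;> omega, Fin.ext ?_⟩
  rw [rot_val, mod_eq_ite_of_lt_two_mul (by split_ifs <;> omega)]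
  split_ifs <;> omega

end Rotation

section Web

variable {n k : ℕ}

/-- Adjacency in `W_n^k` in terms of values, or of offsets from a common vertex. -/
def WebNbr (n k s s' : ℕ) : Prop := s ≠ s' ∧ (Nat.dist s s' ≤ k ∨ n - k ≤ Nat.dist s s')

/-- The generalized neighborhood in `W_n^k` read on offsets, `S` being the offsets of the
vertices of `C`. -/
def WebGN (n k : ℕ) (S : Set ℕ) (s s' : ℕ) : Prop := WebNbr n k s s' ∨ (s' = s ∧ s ∈ S)

lemma webG_adj_iff {x y : Fin n} : (webG n k).Adj x y ↔ WebNbr n k x y :=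
  and_congr_left' Fin.val_ne_iff.symm

/-- Rotations are automorphisms of the web graph. -/
lemma webG_adj_rot (i : Fin n) {s s' : ℕ} (hs : s < n) (hs' : s' < n) :
    (webG n k).Adj (rot i s) (rot i s') ↔ WebNbr n k s s' := by
  have := i.2
  rw [webG_adj_iff, WebNbr, WebNbr, rot_val, rot_val, Nat.dist, Nat.dist,
    mod_eq_ite_of_lt_two_mul (by omega), mod_eq_ite_of_lt_two_mul (by omega)]
  split_ifs <;> omega

variable {C : Set (Fin n)}

lemma rot_mem_gN_rot (i : Fin n) {s s' : ℕ} (hs : s < n) (hs' : s' < n) :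
    rot i s' ∈ gN (webG n k) C (rot i s) ↔ WebGN n k {s | rot i s ∈ C} s s' := by
  rw [mem_gN, webG_adj_rot i hs hs', rot_inj i hs' hs, WebGN]; rfl

lemma rot_mem_gN_self (i : Fin n) {s : ℕ} (hs : s < n) :
    rot i s ∈ gN (webG n k) C i ↔ WebNbr n k 0 s ∨ (s = 0 ∧ i ∈ C) := by
  simpa [rot_zero, WebGN] using rot_mem_gN_rot (C := C) (k := k) i i.pos hs

lemma exists_subset_gN_card (hn : 2 * k < n) (v : Fin n) :
    ∃ N ⊆ gN (webG n k) C v, v ∉ N ∧ N.card = 2 * k := by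
  set D := Finset.Icc 1 k ∪ Finset.Icc (n - k) (n - 1)
  have hD : D.card = 2 * k := by
    rw [Finset.card_union_of_disjoint, Nat.card_Icc, Nat.card_Icc]
    · omega
    · exact Finset.disjoint_left.mpr fun a ha hb => by simp at ha hb; omega
  have hDn : ∀ s ∈ D, 0 < s ∧ s < n := fun s hs => by simp [D] at hs; omega
  refine ⟨D.image (rot v), fun x hx => ?_, fun hv => ?_, ?_⟩
  · obtain ⟨s, hs, rfl⟩ := Finset.mem_image.mp hx
    rw [rot_mem_gN_self v (hDn s hs).2, WebNbr, Nat.dist]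
    simp [D] at hs
    omega
  · obtain ⟨s, hs, hsv⟩ := Finset.mem_image.mp hv
    nth_rw 2 [← rot_zero v] at hsv
    rw [rot_inj v (hDn s hs).2 v.pos] at hsv
    exact (hDn s hs).1.ne' hsv
  · rw [Finset.card_image_of_injOn fun a ha b hb hab =>
      (rot_inj v (hDn a ha).2 (hDn b hb).2).mp hab, hD]

lemma two_mul_le_card_gN (hn : 2 * k < n) (v : Fin n) : 2 * k ≤ (gN (webG n k) C v).card := by
  obtain ⟨N, hN, -, hcard⟩ := exists_subset_gN_card (C := C) hn v
  exact hcard ▸ Finset.card_le_card hN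

lemma two_mul_lt_card_gN (hn : 2 * k < n) {v : Fin n} (hv : v ∈ C) :
    2 * k < (gN (webG n k) C v).card := by
  obtain ⟨N, hN, hvN, hcard⟩ := exists_subset_gN_card (C := C) hn v
  rw [← hcard, Nat.lt_iff_add_one_le, ← Finset.card_insert_of_notMem hvN]
  exact Finset.card_le_card (Finset.insert_subset ((self_mem_gN_iff _ _).mpr hv) hN)

end Web

section Bounds

variable [Fintype V] [DecidableEq V] {G : SimpleGraph V} {C : Set V}

lemma IsLegal.card_gN_add_length_le {v : V} {l : List V} (h : IsLegal G C (v :: l))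
    (hdom : IsDom G C (v :: l)) : (gN G C v).card + l.length ≤ Fintype.card V := by
  have := (isLegal_cons_iff.mp h).card_add_length_le
  rwa [← nUnion_cons, show nUnion G C (v :: l) = _ from hdom, Finset.card_univ] at this

lemma IsLegal.isTight {v : V} {l : List V} (h : IsLegal G C (v :: l))
    (hdom : IsDom G C (v :: l)) (hcard : (gN G C v).card + l.length = Fintype.card V) :
    IsTight G C (gN G C v) l :=
  (isLegal_cons_iff.mp h).isTight (by rw [← nUnion_cons]; exact hdom) hcard

end Bounds

lemma IsDom.ne_nil [Fintype V] {G : SimpleGraph V} {C : Set V} {l : List V}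
    (h : IsDom G C l) (v : V) : l ≠ [] := by
  rintro rfl
  exact Finset.notMem_empty v (by rw [← nUnion_nil G C, h]; simp)

lemma grundy_eq_of_forall_le [Fintype V] {G : SimpleGraph V} {C : Set V} {m : ℕ}
    (hex : ∃ l, IsLegal G C l ∧ IsDom G C l ∧ l.length = m)
    (hle : ∀ l, IsLegal G C l → IsDom G C l → l.length ≤ m) : grundy G C = m :=
  IsGreatest.csSup_eq ⟨hex, fun _ ⟨l, hl, hd, hlen⟩ => hlen ▸ hle l hl hd⟩

section WebSequences

variable {n k : ℕ} {C : Set (Fin n)}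

lemma mem_take_finRange {j : ℕ} {x : Fin n} : x ∈ (List.finRange n).take j ↔ x.val < j := by
  rw [List.mem_take_iff_getElem]
  constructor
  · rintro ⟨a, ha, rfl⟩
    simp at ha ⊢
    omega
  · intro hx
    exact ⟨x, by simp [hx], by simp⟩

/-- The `j`-th vertex newly dominates `j + k`. -/
lemma isLegal_take_finRange (hk : 1 ≤ k) :
    IsLegal (webG n k) C ((List.finRange n).take (n - 2 * k)) := by
  refine ⟨(List.nodup_finRange n).sublist (List.take_sublist _ _), fun j hj _ => ?_⟩
  have hjn : j < n - 2 * k := by simpa using hj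
  refine Finset.not_subset.mpr ⟨⟨j + k, by omega⟩, ?_, ?_⟩
  · rw [mem_gN, webG_adj_iff]
    left
    simp [WebNbr, Nat.dist]
    omega
  · rw [mem_nUnion]
    rintro ⟨v, hv, hx⟩
    rw [List.take_take, mem_take_finRange] at hv
    rw [mem_gN, webG_adj_iff, Fin.ext_iff] at hx
    simp only [WebNbr, Nat.dist] at hx
    omega

lemma isDom_take_finRange (hk : 1 ≤ k) (hn : 2 * (k + 1) ≤ n) :
    IsDom (webG n k) C ((List.finRange n).take (n - 2 * k)) := by
  rw [IsDom, Finset.eq_univ_iff_forall]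
  intro x
  have hdom : ∀ y < n - 2 * k, WebNbr n k y x →
      x ∈ nUnion (webG n k) C ((List.finRange n).take (n - 2 * k)) := fun y hy hyx =>
    (mem_nUnion _ _).mpr ⟨⟨y, by omega⟩, mem_take_finRange.mpr hy,
      (mem_gN _ _).mpr (Or.inl (webG_adj_iff.mpr hyx))⟩
  have := x.2
  simp only [WebNbr, Nat.dist] at hdom
  by_cases h0 : x.val = 0
  · exact hdom 1 (by omega) (by omega)
  by_cases h1 : x.val ≤ n - 2 * k
  · exact hdom (x.val - 1) (by omega) (by omega)
  by_cases h2 : x.val < n - k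
  · exact hdom (n - 2 * k - 1) (by omega) (by omega)
  · exact hdom 0 (by omega) (by omega)

end WebSequences

section Cycle

variable {n c d s w : ℕ} {S : Set ℕ}

/-- `CycleGap n c d` is the set of offsets from `i` still undominated while a tight sequence
peels the path `1, …, n - 3` of `W_n^1 ∖ N[i]` (offset `a + 1` is path vertex `a`) from its
ends: the path vertices `c, …, d` are untouched, and of `i` and the peeled ends exactly every
second vertex is left over; these form `CycleSide n c d`. -/
def CycleSide (n c d s : ℕ) : Prop :=
  (s % 2 = 0 ∧ s < c) ∨ (d + 1 < s ∧ s < n ∧ (n - s) % 2 = 0)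

def CycleGap (n c d s : ℕ) : Prop := CycleSide n c d s ∨ (c < s ∧ s ≤ d + 1)

lemma cycleGap_add_two_left (hc : c % 2 = 1) (hcd : c + 2 ≤ d) :
    CycleGap n (c + 2) d s ↔ s ≠ c + 2 ∧ CycleGap n c d s := by
  unfold CycleGap CycleSide
  omega

lemma cycleGap_sub_two_right (hd : (n - d) % 2 = 1) (hcd : c + 2 ≤ d) (hdn : d + 3 ≤ n) :
    CycleGap n c (d - 2) s ↔ s ≠ d ∧ CycleGap n c d s := by
  unfold CycleGap CycleSide
  omega

lemma CycleSide.of_add_two_left (hc : c % 2 = 1) (h : CycleSide n (c + 2) d s) :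
    s = c + 1 ∨ CycleSide n c d s := by
  unfold CycleSide at *
  omega

lemma CycleSide.of_sub_two_right (hd : (n - d) % 2 = 1) (hcd : c + 2 ≤ d)
    (h : CycleSide n c (d - 2) s) :
    s = d + 1 ∨ CycleSide n c d s := by
  unfold CycleSide at *
  omega

/-- Only `c + 1` and `d + 1` have exactly one undominated neighbor. -/
lemma cycle_step_of_webNbr (hc : c % 2 = 1) (hd : (n - d) % 2 = 1) (hcd : c ≤ d) (hdn : d + 3 ≤ n)
    (hs : s < n) (hw : w < n) (hsw : WebNbr n 1 s w) (hwG : CycleGap n c d w)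
    (hnew : ∀ s' < n, WebGN n 1 S s s' ∧ CycleGap n c d s' ↔ s' = w) :
    (s = c + 1 ∧ w = c + 2 ∨ s = d + 1 ∧ w = d) ∧ c < d := by
  have hnot : ∀ s' < n, s' ≠ w → WebNbr n 1 s s' → ¬ CycleGap n c d s' :=
    fun s' hs' hne hN hG => hne ((hnew s' hs').mp ⟨Or.inl hN, hG⟩)
  unfold CycleGap CycleSide at hwG
  unfold WebNbr Nat.dist at hsw
  rcases (by omega : w = s + 1 ∨ s = w + 1 ∨ (s = 0 ∧ w = n - 1) ∨ (s = n - 1 ∧ w = 0))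
    with h | h | h | h
  · have := hnot (s - 1) (by omega) (by omega) (by unfold WebNbr Nat.dist; omega)
    unfold CycleGap CycleSide at this
    omega
  · have := hnot (if s + 1 = n then 0 else s + 1) (by split_ifs <;> omega)
      (by split_ifs <;> omega) (by unfold WebNbr Nat.dist; split_ifs <;> omega)
    unfold CycleGap CycleSide at this
    split_ifs at this <;> omega
  · have := hnot 1 (by omega) (by omega) (by unfold WebNbr Nat.dist; omega)
    unfold CycleGap CycleSide at this
    omega
  · have := hnot (n - 2) (by omega) (by omega) (by unfold WebNbr Nat.dist; omega)
    unfold CycleGap CycleSide at this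
    omega

lemma cycle_step (hc : c % 2 = 1) (hd : (n - d) % 2 = 1) (hcd : c ≤ d) (hdn : d + 3 ≤ n)
    (hside : ∀ s' < n, CycleSide n c d s' → s' ∉ S) (hs : s < n) (hw : w < n)
    (hnew : ∀ s' < n, WebGN n 1 S s s' ∧ CycleGap n c d s' ↔ s' = w) :
    (d = c ∧ c + 1 ∈ S) ∨ (c < d ∧ c + 1 ∉ S ∧ w = c + 2) ∨ (c < d ∧ d + 1 ∉ S ∧ w = d) := by
  obtain ⟨hN | ⟨rfl, hsS⟩, hG⟩ := (hnew w hw).mpr rfl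
  · have hsS : s ∈ S → ¬ CycleGap n c d s := fun hsS hG =>
      hN.1 ((hnew s hs).mp ⟨Or.inr ⟨rfl, hsS⟩, hG⟩)
    obtain ⟨⟨rfl, rfl⟩ | ⟨rfl, rfl⟩, hlt⟩ := cycle_step_of_webNbr hc hd hcd hdn hs hw hN hG hnew
    · exact Or.inr (Or.inl ⟨hlt, fun h => hsS h (Or.inr (by omega)), rfl⟩)
    · exact Or.inr (Or.inr ⟨hlt, fun h => hsS h (Or.inr (by omega)), rfl⟩)
  · have hmid : ¬ CycleSide n c d w := fun h => hside w hw h hsS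
    have hnot : ∀ s' < n, s' ≠ w → WebNbr n 1 w s' → ¬ CycleGap n c d s' :=
      fun s' hs' hne hN hG => hne ((hnew s' hs').mp ⟨Or.inl hN, hG⟩)
    unfold CycleGap CycleSide at hG
    unfold CycleSide at hmid
    have h1 := hnot (w + 1) (by omega) (by omega) (by unfold WebNbr Nat.dist; omega)
    have h2 := hnot (w - 1) (by omega) (by omega) (by unfold WebNbr Nat.dist; omega)
    unfold CycleGap CycleSide at h1 h2
    have hsc : w = c + 1 ∧ d = c := by omega
    exact Or.inl ⟨hsc.2, hsc.1 ▸ hsS⟩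

end Cycle

section FirstStep

variable {n k s w : ℕ} {S : Set ℕ}

lemma mem_path_of_first_step (hn : 2 * (k + 1) ≤ n) (h0 : 0 ∉ S) (hs : s < n) (hw : w < n)
    (hnew : ∀ s' < n, WebGN n k S s s' ∧ (s' = 0 ∨ (k < s' ∧ s' < n - k)) ↔ s' = w) :
    k < s ∧ s < n - k := by
  have two : ∀ a < n, ∀ b < n, WebGN n k S s a ∧ (a = 0 ∨ (k < a ∧ a < n - k)) →
      WebGN n k S s b ∧ (b = 0 ∨ (k < b ∧ b < n - k)) → a = b :=
    fun a ha b hb h1 h2 => ((hnew a ha).mp h1).trans ((hnew b hb).mp h2).symm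
  obtain ⟨hwN, hwU⟩ := (hnew w hw).mpr rfl
  unfold WebGN WebNbr Nat.dist at two hwN
  by_contra hsP
  rcases (by omega : s = 0 ∨ (0 < s ∧ s ≤ k) ∨ n - k ≤ s) with hs0 | hsk | hsk
  · rcases hwN with hwN | ⟨-, hsS⟩
    · omega
    · exact h0 (hs0 ▸ hsS)
  · have := two 0 (by omega) (k + 1) (by omega) ⟨Or.inl (by omega), by omega⟩
      ⟨Or.inl (by omega), by omega⟩
    omega
  · have := two 0 (by omega) (n - k - 1) (by omega) ⟨Or.inl (by omega), by omega⟩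
      ⟨Or.inl (by omega), by omega⟩
    omega

/-- For `k ≥ 2` any three consecutive vertices of `V ∖ N[i]` form a triangle. -/
lemma le_two_of_first_step (hk : 2 ≤ k) (hsP : k < s ∧ s < n - k)
    (hnew : ∀ s' < n, WebGN n k S s s' ∧ (s' = 0 ∨ (k < s' ∧ s' < n - k)) ↔ s' = w) :
    n - 2 * k - 1 ≤ 2 := by
  have two : ∀ a < n, ∀ b < n, WebNbr n k s a → k < a ∧ a < n - k →
      WebNbr n k s b → k < b ∧ b < n - k → a = b :=
    fun a ha b hb h1 h1' h2 h2' => ((hnew a ha).mp ⟨Or.inl h1, Or.inr h1'⟩).trans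
      ((hnew b hb).mp ⟨Or.inl h2, Or.inr h2'⟩).symm
  unfold WebNbr Nat.dist at two
  by_contra ht
  rcases (by omega : s = k + 1 ∨ s = n - k - 1 ∨ (k + 1 < s ∧ s < n - k - 1)) with h | h | h
  · have := two (k + 2) (by omega) (k + 3) (by omega) (by omega) (by omega) (by omega) (by omega)
    omega
  · have := two (s - 1) (by omega) (s - 2) (by omega) (by omega) (by omega) (by omega) (by omega)
    omega
  · have := two (s - 1) (by omega) (s + 1) (by omega) (by omega) (by omega) (by omega) (by omega)
    omega

lemma goodConf_of_first_step (hk : 2 ≤ k) (hn : 2 * (k + 1) ≤ n) (h0 : 0 ∉ S) (hs : s < n)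
    (hw : w < n)
    (hnew : ∀ s' < n, WebGN n k S s s' ∧ (s' = 0 ∨ (k < s' ∧ s' < n - k)) ↔ s' = w) :
    n - 2 * k - 1 ≤ 2 ∧ GoodConf {a | a + k ∈ S} 1 (n - 2 * k - 1) := by
  have hsP := mem_path_of_first_step hn h0 hs hw hnew
  have ht := le_two_of_first_step hk hsP hnew
  refine ⟨ht, ?_⟩
  obtain ⟨hwN, hwU⟩ := (hnew w hw).mpr rfl
  unfold WebGN WebNbr Nat.dist at hwN
  rcases (by omega : n - 2 * k - 1 = 1 ∨ n - 2 * k - 1 = 2) with ht | ht <;> rw [ht]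
  · refine .single 1 ?_
    rcases hwN with hwN | ⟨-, hsS⟩
    · omega
    · show 1 + k ∈ S
      rwa [show 1 + k = s by omega]
  · refine .pair 1 fun ⟨h1, h2⟩ => ?_
    have hpair : ∀ a b, k < a → a < n - k → k < b → b < n - k → a ≠ b →
        WebGN n k S s a → ¬ WebGN n k S s b := fun a b ha ha' hb hb' hab h1 h2 =>
      hab (((hnew a (by omega)).mp ⟨h1, Or.inr ⟨ha, ha'⟩⟩).trans
        ((hnew b (by omega)).mp ⟨h2, Or.inr ⟨hb, hb'⟩⟩).symm)
    unfold WebGN WebNbr Nat.dist at hpair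
    rcases (by omega : s = 1 + k ∨ s = 2 + k) with rfl | rfl
    · exact hpair (1 + k) (2 + k) (by omega) (by omega) (by omega) (by omega) (by omega)
        (Or.inr ⟨rfl, h1⟩) (Or.inl (by omega))
    · exact hpair (2 + k) (1 + k) (by omega) (by omega) (by omega) (by omega) (by omega)
        (Or.inr ⟨rfl, h2⟩) (Or.inl (by omega))

end FirstStep

section TightSequences

variable {n k : ℕ} {C : Set (Fin n)}

lemma exists_offsets_of_sdiff_eq {X : Finset (Fin n)} {u w : Fin n}
    (hw : gN (webG n k) C u \ X = {w}) (i : Fin n) {U : ℕ → Prop}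
    (hX : ∀ s < n, rot i s ∉ X ↔ U s) :
    ∃ s < n, ∃ sw < n, w = rot i sw ∧
      ∀ s' < n, WebGN n k {s | rot i s ∈ C} s s' ∧ U s' ↔ s' = sw := by
  obtain ⟨s, hs, rfl⟩ := exists_rot_eq i u
  obtain ⟨sw, hsw, rfl⟩ := exists_rot_eq i w
  refine ⟨s, hs, sw, hsw, rfl, fun s' hs' => ?_⟩
  have := Finset.ext_iff.mp hw (rot i s')
  rwa [Finset.mem_sdiff, Finset.mem_singleton, rot_mem_gN_rot i hs hs', hX s' hs',
    rot_inj i hs' hsw] at this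

/-- On the cycle `W_n^1` a tight sequence peels the path off from its two ends, one good
configuration rule per step. -/
lemma goodConf_of_isTight_cycle (i : Fin n) {l : List (Fin n)} {X : Finset (Fin n)} {c d : ℕ}
    (h : IsTight (webG n 1) C X l) (hc : c % 2 = 1) (hd : (n - d) % 2 = 1) (hcd : c ≤ d)
    (hdn : d + 3 ≤ n) (hX : ∀ s < n, rot i s ∉ X ↔ CycleGap n c d s)
    (hside : ∀ s < n, CycleSide n c d s → rot i s ∉ C) :
    GoodConf {a | rot i (a + 1) ∈ C} c d := by
  induction l generalizing X c d with
  | nil =>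
    exact absurd (h ▸ Finset.mem_univ _) ((hX (c + 1) (by omega)).mpr (Or.inr ⟨by omega, by omega⟩))
  | cons u l ih =>
    obtain ⟨w, hw, ht⟩ := h
    obtain ⟨s, hs, sw, hsw, rfl, hnew⟩ := exists_offsets_of_sdiff_eq hw i hX
    have hX' : ∀ s' < n, rot i s' ∉ insert (rot i sw) X ↔ s' ≠ sw ∧ CycleGap n c d s' :=
      fun s' hs' => by rw [Finset.mem_insert, not_or, rot_inj i hs' hsw, hX s' hs']
    rcases cycle_step hc hd hcd hdn hside hs hsw hnew with
      ⟨hdc, hC⟩ | ⟨hlt, hC, rfl⟩ | ⟨hlt, hC, hswd⟩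
    · rw [hdc]
      exact .single c hC
    · rcases (by omega : d = c + 1 ∨ c + 2 ≤ d) with rfl | hcd'
      · exact .pair c fun h => hC h.1
      refine .left c d hcd' hC (ih ht (by omega) hd hcd' hdn
        (fun s' hs' => by rw [hX' s' hs', cycleGap_add_two_left hc hcd'])
        (fun s' hs' hs'S => ?_))
      rcases hs'S.of_add_two_left hc with rfl | hs'S
      exacts [hC, hside s' hs' hs'S]
    · subst sw
      rcases (by omega : d = c + 1 ∨ c + 2 ≤ d) with rfl | hcd'
      · exact .pair c fun h => hC h.2
      refine .right c d hcd' hC (ih ht hc (by omega) (by omega) (by omega)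
        (fun s' hs' => by rw [hX' s' hs', cycleGap_sub_two_right hd hcd' hdn])
        (fun s' hs' hs'S => ?_))
      rcases hs'S.of_sub_two_right hd hcd' with rfl | hs'S
      exacts [hC, hside s' hs' hs'S]

lemma goodConf_of_isTight (hk : 1 ≤ k) (hn : 2 * (k + 1) ≤ n) {i : Fin n} (hi : i ∉ C)
    {l : List (Fin n)} (h : IsTight (webG n k) C (gN (webG n k) C i) l) :
    (k = 1 ∨ n - 2 * k - 1 ≤ 2) ∧ GoodConf {a | rot i (a + k) ∈ C} 1 (n - 2 * k - 1) := by
  have hX : ∀ s < n, rot i s ∉ gN (webG n k) C i ↔ s = 0 ∨ (k < s ∧ s < n - k) :=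
    fun s hs => by
      rw [rot_mem_gN_self i hs]
      unfold WebNbr Nat.dist
      simp only [hi, and_false, or_false]
      omega
  rcases (by omega : k = 1 ∨ 2 ≤ k) with rfl | hk
  · refine ⟨Or.inl rfl, ?_⟩
    rw [show n - 2 * 1 - 1 = n - 3 by omega]
    refine goodConf_of_isTight_cycle i h (by omega) (by omega) (by omega) (by omega)
      (fun s hs => ?_) (fun s hs hside => ?_)
    · rw [hX s hs]
      unfold CycleGap CycleSide
      omega
    · rwa [show s = 0 by unfold CycleSide at hside; omega, rot_zero]
  · cases l with
    | nil => exact absurd (h ▸ Finset.mem_univ i) ((rot_zero i ▸ hX 0 i.pos).mpr (Or.inl rfl))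
    | cons u l =>
      obtain ⟨w, hw, -⟩ := h
      obtain ⟨s, hs, sw, hsw, -, hnew⟩ := exists_offsets_of_sdiff_eq hw i hX
      exact (goodConf_of_first_step hk hn (by simpa [rot_zero]) hs hsw hnew).imp_left Or.inr

end TightSequences

section Main

variable {n k : ℕ} {C : Set (Fin n)}

lemma exists_iso_pathG (hk : 1 ≤ k) (hn : 2 * (k + 1) ≤ n) (i : Fin n)
    (hpath : k = 1 ∨ n - 2 * k - 1 ≤ 2) :
    ∃ e : pathG (n - 2 * k - 1) ≃g
        (webG n k).induce {v : Fin n | v ≠ i ∧ ¬ (webG n k).Adj i v},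
      ∀ a (h : a ∈ Set.Icc 1 (n - 2 * k - 1)), (e ⟨a, h⟩ : Fin n) = rot i (a + k) := by
  have hoff : ∀ s < n, rot i s ∈ {v : Fin n | v ≠ i ∧ ¬ (webG n k).Adj i v} ↔
      k < s ∧ s < n - k := fun s hs => by
    have h1 := rot_inj i hs i.pos
    have h2 := webG_adj_rot (k := k) i i.pos hs
    rw [rot_zero] at h1 h2
    rw [Set.mem_ofPred_eq, ne_eq, h1, h2, WebNbr, Nat.dist]
    omega
  let φ : Set.Icc 1 (n - 2 * k - 1) → {v : Fin n | v ≠ i ∧ ¬ (webG n k).Adj i v} :=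
    fun a => ⟨rot i (a + k), (hoff _ (by grind)).mpr (by grind)⟩
  have hφ : Function.Bijective φ := by
    refine ⟨fun a b hab => Subtype.ext ?_, fun v => ?_⟩
    · have := (rot_inj i (by grind) (by grind)).mp (congrArg Subtype.val hab)
      omega
    · obtain ⟨s, hs, hsv⟩ := exists_rot_eq i v
      have := (hoff s hs).mp (hsv ▸ v.2)
      exact ⟨⟨s - k, by grind⟩, Subtype.ext (by simp [φ, ← hsv, show s - k + k = s by omega])⟩
  refine ⟨⟨Equiv.ofBijective φ hφ, fun {a b} => ?_⟩, fun a h => rfl⟩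
  have ha := a.2
  have hb := b.2
  simp only [Set.mem_Icc] at ha hb
  change (webG n k).Adj (rot i (a + k)) (rot i (b + k)) ↔ (a : ℕ) + 1 = b ∨ (b : ℕ) + 1 = a
  rw [webG_adj_rot i (by omega) (by omega), WebNbr, Nat.dist]
  omega

theorem webPathCond_of_isTight (hk : 1 ≤ k) (hn : 2 * (k + 1) ≤ n) {i : Fin n} (hi : i ∉ C)
    {l : List (Fin n)} (h : IsTight (webG n k) C (gN (webG n k) C i) l) :
    WebPathCond n k C := by
  obtain ⟨hpath, hgood⟩ := goodConf_of_isTight hk hn hi h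
  obtain ⟨e, he⟩ := exists_iso_pathG hk hn i hpath
  exact ⟨i, hi, e, hgood.congr fun a h1 h2 => by simp [he a ⟨h1, h2⟩, h1, h2]⟩

lemma length_le_of_isLegal_webG (hn : 2 * (k + 1) ≤ n) {l : List (Fin n)}
    (hl : IsLegal (webG n k) C l) (hd : IsDom (webG n k) C l) : l.length ≤ n - 2 * k + 1 := by
  obtain ⟨v, l, rfl⟩ := List.exists_cons_of_ne_nil (hd.ne_nil ⟨0, by omega⟩)
  have hle := hl.card_gN_add_length_le hd
  have hge := two_mul_le_card_gN (C := C) (by omega : 2 * k < n) v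
  simp only [Fintype.card_fin, List.length_cons] at *
  omega

lemma webPathCond_of_length_eq (hk : 1 ≤ k) (hn : 2 * (k + 1) ≤ n) {l : List (Fin n)}
    (hl : IsLegal (webG n k) C l) (hd : IsDom (webG n k) C l)
    (hlen : l.length = n - 2 * k + 1) : WebPathCond n k C := by
  obtain ⟨v, l, rfl⟩ := List.exists_cons_of_ne_nil (hd.ne_nil ⟨0, by omega⟩)
  have hle := hl.card_gN_add_length_le hd
  have hge := two_mul_le_card_gN (C := C) (by omega : 2 * k < n) v
  have hv : v ∉ C := fun hv => by
    have := two_mul_lt_card_gN (C := C) (by omega : 2 * k < n) hv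
    simp only [Fintype.card_fin, List.length_cons] at *
    omega
  refine webPathCond_of_isTight hk hn hv (hl.isTight hd ?_)
  simp only [Fintype.card_fin, List.length_cons] at *
  omega

theorem grundy_webG_of_webPathCond (hk : 1 ≤ k) (hn : 2 * (k + 1) ≤ n)
    (h : WebPathCond n k C) : grundy (webG n k) C = n - 2 * k + 1 := by
  obtain ⟨i, hi, e, hgood⟩ := h
  refine grundy_eq_of_forall_le ?_ fun l hl hd => length_le_of_isLegal_webG hn hl hd
  have hadj : (webG n k).Adj i (rot i 1) := by
    have h := webG_adj_rot (k := k) i (s := 0) (s' := 1) i.pos (by omega)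
    rw [rot_zero] at h
    exact h.mpr (by unfold WebNbr Nat.dist; omega)
  obtain ⟨l, hl, hd, hlen⟩ := exists_isLegal_isDom_of_induce_path hi hadj e hgood
  exact ⟨l, hl, hd, by omega⟩

theorem grundy_webG_of_not_webPathCond (hk : 1 ≤ k) (hn : 2 * (k + 1) ≤ n)
    (h : ¬ WebPathCond n k C) : grundy (webG n k) C = n - 2 * k := by
  refine grundy_eq_of_forall_le ⟨_, isLegal_take_finRange hk, isDom_take_finRange hk hn,
    by simp⟩ fun l hl hd => ?_
  have hle := length_le_of_isLegal_webG hn hl hd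
  exact Nat.le_of_lt_succ (hle.lt_of_ne fun hlen => h (webPathCond_of_length_eq hk hn hl hd hlen))

end Main

/-- For the web graph `W_n^k` with `n ≥ 2(k+1)` and `m = n − 2k` if `C = V`,
`m = n − 2k + 1` otherwise: `γ_gr(W_n^k;C) = m` iff `C = V` or condition (ii) holds; in all
other cases `γ_gr(W_n^k;C) = m − 1`. -/
theorem grundy_web (n k : ℕ) (hk : 1 ≤ k) (hn : 2 * (k + 1) ≤ n) (C : Set (Fin n)) (m : ℕ)
    (hm₁ : C = Set.univ → m = n - 2 * k) (hm₂ : C ≠ Set.univ → m = n - 2 * k + 1) :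
    (grundy (webG n k) C = m ↔ (C = Set.univ ∨ WebPathCond n k C)) ∧
    (¬ (C = Set.univ ∨ WebPathCond n k C) → grundy (webG n k) C = m - 1) := by
  have huniv : C = Set.univ → ¬ WebPathCond n k C := fun hC ⟨_, hi, _⟩ => hi (hC ▸ trivial)
  by_cases hcond : WebPathCond n k C
  · rw [grundy_webG_of_webPathCond hk hn hcond, hm₂ fun hC => huniv hC hcond]
    simp [hcond]
  · rw [grundy_webG_of_not_webPathCond hk hn hcond]
    by_cases hC : C = Set.univ
    · simp [hC, hm₁ hC]
    · simp [hC, hcond, hm₂ hC]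

end LegalSeq
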